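/- arXiv:0901.3202 — 3 statements merged into one kernel-verified Lean document; each statement's English description precedes it below -/
import Mathlib

section
/- Let Q ∈ ℝ^{p×p} be symmetric positive definite and q ∈ ℝ^p, 𝐰 ∈ ℝ^p, μ ≥ 0. Let ŵ be the unique minimizer of J(w) = ½(w−𝐰)ᵀQ(w−𝐰) − qᵀ(w−𝐰) + μ‖w‖₁. Then ‖ŵ − 𝐰‖₂ ≤ (p^{1/2}·μ + ‖q‖₂)/λ_min(Q). -/
/-!
Put `d = ŵ - w`. Since `ŵ` minimizes `J` on the segment from `w` to `ŵ`, and the `ℓ¹` term is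
convex there while the quadratic term scales by `(1 - t)²`, comparing `J ŵ` with
`J (w + (1 - t) d)` and letting `t → 0⁺` gives the first-order inequality
`dᵀ Q d ≤ qᵀ d + μ (‖w‖₁ - ‖ŵ‖₁)`.
By Cauchy–Schwarz and `‖d‖₁ ≤ √p ‖d‖₂` the right side is at most `(√p μ + ‖q‖₂) ‖d‖₂`, while
the left side is at least `λ_min(Q) ‖d‖₂²`; dividing by `λ_min(Q) ‖d‖₂` gives the bound.
`λ_min(Q) > 0` because the Rayleigh quotient attains its infimum on the compact unit sphere.
-/

open Matrix

/-- Smallest eigenvalue of a symmetric matrix, as the infimum of the Rayleigh quotient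
over the unit sphere. -/
noncomputable def lambdaMin {ι : Type*} [Fintype ι] (A : Matrix ι ι ℝ) : ℝ :=
  sInf {r | ∃ v : ι → ℝ, (∑ i, v i ^ 2) = 1 ∧ r = v ⬝ᵥ A.mulVec v}

/-- Largest eigenvalue of a symmetric matrix, as the supremum of the Rayleigh quotient
over the unit sphere. -/
noncomputable def lambdaMax {ι : Type*} [Fintype ι] (A : Matrix ι ι ℝ) : ℝ :=
  sSup {r | ∃ v : ι → ℝ, (∑ i, v i ^ 2) = 1 ∧ r = v ⬝ᵥ A.mulVec v}

/-- The `ℓ²` operator norm (largest singular value) of a matrix. -/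
noncomputable def opNorm {ι : Type*} [Fintype ι] (A : Matrix ι ι ℝ) : ℝ :=
  sSup {r | ∃ v : ι → ℝ, (∑ i, v i ^ 2) = 1 ∧ r = Real.sqrt (∑ i, (A.mulVec v i) ^ 2)}

/-- The euclidean (`ℓ²`) norm of a vector. -/
noncomputable def norm2 {ι : Type*} [Fintype ι] (v : ι → ℝ) : ℝ :=
  Real.sqrt (∑ i, v i ^ 2)

/-- The `ℓ¹` norm of a vector. -/
noncomputable def norm1 {ι : Type*} [Fintype ι] (v : ι → ℝ) : ℝ :=
  ∑ i, |v i|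

open Filter Set Topology

theorem nonpos_of_forall_le_mul {x y : ℝ} (h : ∀ t : ℝ, 0 < t → t ≤ 1 → x ≤ t * y) : x ≤ 0 := by
  have hlim : Tendsto (fun t : ℝ => t * y) (𝓝[>] 0) (𝓝 0) :=
    ((continuous_mul_const y).tendsto' 0 0 (zero_mul y)).mono_left nhdsWithin_le_nhds
  refine ge_of_tendsto hlim ?_
  filter_upwards [Ioc_mem_nhdsGT one_pos] with t ht using h t ht.1 ht.2

section Vectors

variable {ι : Type*} [Fintype ι]

theorem norm2_nonneg (v : ι → ℝ) : 0 ≤ norm2 v := Real.sqrt_nonneg _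

theorem sq_norm2 (v : ι → ℝ) : norm2 v ^ 2 = ∑ i, v i ^ 2 :=
  Real.sq_sqrt (Finset.sum_nonneg fun i _ => sq_nonneg (v i))

theorem dotProduct_le_norm2_mul_norm2 (u v : ι → ℝ) : u ⬝ᵥ v ≤ norm2 u * norm2 v :=
  Real.sum_mul_le_sqrt_mul_sqrt _ _ _

theorem norm1_le_sqrt_card_mul_norm2 (v : ι → ℝ) : norm1 v ≤ √(Fintype.card ι) * norm2 v := by
  simpa [norm1, norm2] using Real.sum_mul_le_sqrt_mul_sqrt Finset.univ (fun _ => (1 : ℝ)) (|v ·|)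

theorem norm1_sub_comm (u v : ι → ℝ) : norm1 (u - v) = norm1 (v - u) := by
  simp only [norm1, Pi.sub_apply, abs_sub_comm]

theorem norm1_sub_norm1_le (u v : ι → ℝ) : norm1 u - norm1 v ≤ norm1 (u - v) := by
  rw [norm1, norm1, norm1, ← Finset.sum_sub_distrib]
  exact Finset.sum_le_sum fun i _ => abs_sub_abs_le_abs_sub (u i) (v i)

theorem convexOn_norm1 : ConvexOn ℝ univ (norm1 : (ι → ℝ) → ℝ) := by
  refine ⟨convex_univ, fun x _ y _ a b ha hb _ => ?_⟩
  simp only [norm1, Finset.mul_sum, ← Finset.sum_add_distrib, smul_eq_mul, Pi.add_apply,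
    Pi.smul_apply]
  refine Finset.sum_le_sum fun i _ => (abs_add_le _ _).trans_eq ?_
  rw [abs_mul, abs_mul, abs_of_nonneg ha, abs_of_nonneg hb]

end Vectors

section RayleighQuotient

variable {ι : Type*} [Fintype ι] (A : Matrix ι ι ℝ)

theorem isCompact_setOf_sum_sq_eq_one : IsCompact {v : ι → ℝ | ∑ i, v i ^ 2 = 1} := by
  refine Metric.isCompact_of_isClosed_isBounded (isClosed_eq (by fun_prop) continuous_const) ?_
  refine (Metric.isBounded_closedBall (x := 0) (r := 1)).subset fun v hv => ?_
  rw [Metric.mem_closedBall, dist_zero_right, pi_norm_le_iff_of_nonneg zero_le_one]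
  intro i
  rw [Real.norm_eq_abs, ← sq_le_one_iff_abs_le_one]
  exact hv ▸ Finset.single_le_sum (fun j _ => sq_nonneg (v j)) (Finset.mem_univ i)

theorem isCompact_setOf_rayleigh :
    IsCompact {r | ∃ v : ι → ℝ, (∑ i, v i ^ 2) = 1 ∧ r = v ⬝ᵥ A.mulVec v} := by
  have himage : {r | ∃ v : ι → ℝ, (∑ i, v i ^ 2) = 1 ∧ r = v ⬝ᵥ A.mulVec v} =
      (fun v => v ⬝ᵥ A *ᵥ v) '' {v | ∑ i, v i ^ 2 = 1} := by
    ext; simp [eq_comm]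
  exact himage ▸ isCompact_setOf_sum_sq_eq_one.image (by fun_prop)

theorem lambdaMin_mul_sum_sq_le (v : ι → ℝ) : lambdaMin A * ∑ i, v i ^ 2 ≤ v ⬝ᵥ A *ᵥ v := by
  obtain hs | hs := (Finset.sum_nonneg fun i _ => sq_nonneg (v i) : 0 ≤ ∑ i, v i ^ 2).eq_or_lt
  · have hv : v = 0 := funext fun i => pow_eq_zero_iff two_ne_zero |>.mp <|
      (Finset.sum_eq_zero_iff_of_nonneg fun j _ => sq_nonneg (v j)).mp hs.symm i (Finset.mem_univ i)
    simp [hv]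
  set s := ∑ i, v i ^ 2
  set u := (√s)⁻¹ • v
  have hu : ∑ i, u i ^ 2 = 1 := by
    simp only [u, Pi.smul_apply, smul_eq_mul, mul_pow, ← Finset.mul_sum, inv_pow,
      Real.sq_sqrt hs.le]
    exact inv_mul_cancel₀ hs.ne'
  have hle : lambdaMin A ≤ u ⬝ᵥ A *ᵥ u :=
    csInf_le (isCompact_setOf_rayleigh A).bddBelow ⟨u, hu, rfl⟩
  have hscale : u ⬝ᵥ A *ᵥ u = s⁻¹ * (v ⬝ᵥ A *ᵥ v) := by
    simp only [u, mulVec_smul, smul_dotProduct, dotProduct_smul, smul_eq_mul, ← mul_assoc,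
      ← mul_inv, Real.mul_self_sqrt hs.le]
  rw [mul_comm, ← le_inv_mul_iff₀ hs]
  exact hscale ▸ hle

theorem lambdaMin_pos [Nonempty ι] (hA : A.PosDef) : 0 < lambdaMin A := by
  classical
  obtain ⟨v, hv, hmin⟩ := (isCompact_setOf_rayleigh A).sInf_mem
    ⟨_, Pi.single (Classical.arbitrary ι) 1, by simp [Pi.single_apply], rfl⟩
  have hv0 : v ≠ 0 := by
    rintro rfl
    simp at hv
  rw [lambdaMin, hmin]
  simpa using hA.dotProduct_mulVec_pos hv0

end RayleighQuotient

theorem dotProduct_mulVec_le_of_isMinimizer {ι : Type*} [Fintype ι] (Q : Matrix ι ι ℝ)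
    (q w wh : ι → ℝ) {g : (ι → ℝ) → ℝ} (hg : ConvexOn ℝ univ g)
    (hmin : ∀ v : ι → ℝ,
      (1 / 2) * ((wh - w) ⬝ᵥ Q.mulVec (wh - w)) - q ⬝ᵥ (wh - w) + g wh ≤
      (1 / 2) * ((v - w) ⬝ᵥ Q.mulVec (v - w)) - q ⬝ᵥ (v - w) + g v) :
    (wh - w) ⬝ᵥ Q *ᵥ (wh - w) ≤ q ⬝ᵥ (wh - w) + (g w - g wh) := by
  set d := wh - w
  set A := d ⬝ᵥ Q *ᵥ d
  suffices h : ∀ t : ℝ, 0 < t → t ≤ 1 → A - (q ⬝ᵥ d + (g w - g wh)) ≤ t * (A / 2) by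
    linarith [nonpos_of_forall_le_mul h]
  intro t ht0 ht1
  have hsegment : g (w + (1 - t) • d) ≤ t * g w + (1 - t) * g wh := by
    have hv : w + (1 - t) • d = t • w + (1 - t) • wh := by
      simp only [d]; module
    rw [hv]
    exact hg.2 (mem_univ _) (mem_univ _) ht0.le (by linarith) (by ring)
  have hcompare := hmin (w + (1 - t) • d)
  simp only [add_sub_cancel_left, mulVec_smul, smul_dotProduct, dotProduct_smul,
    smul_eq_mul] at hcompare
  refine le_of_mul_le_mul_left ?_ ht0
  linarith

/-- Error bound for the Lasso-type minimizer:
`‖ŵ − 𝐰‖₂ ≤ (√p·μ + ‖q‖₂)/λ_min(Q)`. -/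
theorem stmt_6 {p : ℕ} (Q : Matrix (Fin p) (Fin p) ℝ) (hQ : Q.PosDef)
    (q w wh : Fin p → ℝ) (μ : ℝ) (hμ : 0 ≤ μ)
    (hmin : ∀ v : Fin p → ℝ,
      (1 / 2) * ((wh - w) ⬝ᵥ Q.mulVec (wh - w)) - q ⬝ᵥ (wh - w) + μ * norm1 wh ≤
      (1 / 2) * ((v - w) ⬝ᵥ Q.mulVec (v - w)) - q ⬝ᵥ (v - w) + μ * norm1 v) :
    norm2 (wh - w) ≤ (Real.sqrt p * μ + norm2 q) / lambdaMin Q := by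
  rcases Nat.eq_zero_or_pos p with rfl | hp
  · simp [norm2]
  have : Nonempty (Fin p) := Fin.pos_iff_nonempty.mp hp
  set d := wh - w
  have hopt : d ⬝ᵥ Q *ᵥ d ≤ q ⬝ᵥ d + (μ * norm1 w - μ * norm1 wh) :=
    dotProduct_mulVec_le_of_isMinimizer Q q w wh (convexOn_norm1.smul hμ) hmin
  have hl1 : norm1 w - norm1 wh ≤ √p * norm2 d :=
    calc norm1 w - norm1 wh ≤ norm1 (w - wh) := norm1_sub_norm1_le w wh
      _ = norm1 d := norm1_sub_comm w wh
      _ ≤ √p * norm2 d := by simpa using norm1_le_sqrt_card_mul_norm2 d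
  have hupper : d ⬝ᵥ Q *ᵥ d ≤ (√p * μ + norm2 q) * norm2 d := by
    linarith [dotProduct_le_norm2_mul_norm2 q d, mul_le_mul_of_nonneg_left hl1 hμ]
  have hlower : lambdaMin Q * norm2 d ^ 2 ≤ d ⬝ᵥ Q *ᵥ d :=
    sq_norm2 d ▸ lambdaMin_mul_sum_sq_le Q d
  rw [le_div_iff₀ (lambdaMin_pos Q hQ)]
  obtain h0 | hpos := (norm2_nonneg d).eq_or_lt
  · rw [← h0, zero_mul]
    exact add_nonneg (mul_nonneg (Real.sqrt_nonneg _) hμ) (norm2_nonneg q)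
  · nlinarith
end

section
/- Assume the linear model y = X𝐰 + ε with subgaussian noise (constant τ, variances ≥ σ²), bounded design (‖xᵢ‖_∞ ≤ M), and Q = (1/n)XᵀX invertible. If μ ≥ 2M²‖𝐰‖₁, then the probability that ŵ = 0 (where ŵ minimizes (1/2n)‖y − Xw‖₂² + μ‖w‖₁) is at least 1 − 2p·exp(−n μ²/(8 M²σ²·(τ/σ)²)). -/
open MeasureTheory ProbabilityTheory Matrix Real
open scoped NNReal

/-!
If every correlation `|(Xᵀε)ⱼ|` is at most `nμ/2`, then `μ ≥ 2M²‖𝐰‖₁` gives `‖Xᵀy‖_∞ ≤ nμ`, and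
expanding the square shows that the Lasso objective satisfies `f v ≥ f 0 + ‖Xv‖²/(2n)`. A minimizer
`ŵ` thus has `Xŵ = 0`, hence `ŵ = 0` since `XᵀX` is invertible. Each `(Xᵀε)ⱼ` is a sum of
independent subgaussian variables with weights bounded by `M`, so by Hoeffding's inequality it
exceeds `nμ/2` in absolute value with probability at most `2 exp(-nμ²/(8M²τ²))`; a union bound over
the `p` coordinates concludes.
-/

namespace Matrix

variable {m ι : Type*} [Fintype ι]

lemma abs_mulVec_apply_le {A : Matrix m ι ℝ} {M : ℝ} (hA : ∀ i j, |A i j| ≤ M)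
    (v : ι → ℝ) (i : m) : |(A *ᵥ v) i| ≤ M * ∑ j, |v j| := by
  rw [Finset.mul_sum]
  calc |(A *ᵥ v) i| = |∑ j, A i j * v j| := rfl
    _ ≤ ∑ j, |A i j * v j| := Finset.abs_sum_le_sum_abs _ _
    _ ≤ ∑ j, M * |v j| := Finset.sum_le_sum fun j _ => by
        rw [abs_mul]
        exact mul_le_mul_of_nonneg_right (hA i j) (abs_nonneg _)

lemma abs_transpose_mulVec_mulVec_apply_le [Fintype m] {X : Matrix m ι ℝ} {M : ℝ} (hM : 0 ≤ M)
    (hX : ∀ i j, |X i j| ≤ M) (w : ι → ℝ) (j : ι) :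
    |(Xᵀ *ᵥ (X *ᵥ w)) j| ≤ Fintype.card m * M ^ 2 * ∑ k, |w k| :=
  calc |(Xᵀ *ᵥ (X *ᵥ w)) j| ≤ M * ∑ i, |(X *ᵥ w) i| :=
        abs_mulVec_apply_le (fun j i => hX i j) _ _
    _ ≤ M * ∑ _i : m, M * ∑ k, |w k| := by
        gcongr with i
        exact abs_mulVec_apply_le hX w i
    _ = Fintype.card m * M ^ 2 * ∑ k, |w k| := by
        rw [Finset.sum_const, Finset.card_univ, nsmul_eq_mul]
        ring

lemma mulVec_injective_of_isUnit_det_smul_gram [Fintype m] [DecidableEq ι] {X : Matrix m ι ℝ}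
    {c : ℝ} (hQ : IsUnit (c • (Xᵀ * X)).det) : Function.Injective X.mulVec := by
  have hinj : Function.Injective (c • (Xᵀ * X)).mulVec :=
    mulVec_injective_iff_isUnit.mpr ((isUnit_iff_isUnit_det _).mpr hQ)
  refine Function.Injective.of_comp (f := fun z => c • (Xᵀ *ᵥ z)) ?_
  convert hinj using 1
  funext v
  simp only [Function.comp_apply, smul_mulVec, mulVec_mulVec]

end Matrix

section Lasso

variable {m ι : Type*} [Fintype m] [Fintype ι]

lemma lasso_objective_ge {X : Matrix m ι ℝ} {y : m → ℝ} {N μ : ℝ} (hN : 0 < N)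
    (hcorr : ∀ j, |(Xᵀ *ᵥ y) j| ≤ N * μ) (v : ι → ℝ) :
    1 / (2 * N) * (∑ i, y i ^ 2 + ∑ i, (X *ᵥ v) i ^ 2) ≤
      1 / (2 * N) * ∑ i, (y i - (X *ᵥ v) i) ^ 2 + μ * ∑ j, |v j| := by
  have hinner : y ⬝ᵥ (X *ᵥ v) ≤ N * μ * ∑ j, |v j| := by
    rw [dotProduct_mulVec, ← mulVec_transpose, Finset.mul_sum]
    refine Finset.sum_le_sum fun j _ => ?_
    calc (Xᵀ *ᵥ y) j * v j ≤ |(Xᵀ *ᵥ y) j| * |v j| := (le_abs_self _).trans_eq (abs_mul _ _)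
      _ ≤ N * μ * |v j| := mul_le_mul_of_nonneg_right (hcorr j) (abs_nonneg _)
  have hexpand : ∑ i, (y i - (X *ᵥ v) i) ^ 2 =
      ∑ i, y i ^ 2 + ∑ i, (X *ᵥ v) i ^ 2 - 2 * (y ⬝ᵥ (X *ᵥ v)) := by
    simp only [dotProduct, sub_sq, Finset.sum_add_distrib, Finset.sum_sub_distrib, Finset.mul_sum]
    ring_nf
  have hpenalty : 1 / (2 * N) * (2 * (N * μ * ∑ j, |v j|)) = μ * ∑ j, |v j| := by
    field_simp
  have hscaled := mul_le_mul_of_nonneg_left (mul_le_mul_of_nonneg_left hinner zero_le_two)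
    (by positivity : 0 ≤ 1 / (2 * N))
  rw [hexpand, mul_sub, ← hpenalty]
  linarith

lemma lasso_minimizer_eq_zero {X : Matrix m ι ℝ} (hX : Function.Injective X.mulVec)
    {y : m → ℝ} {N μ : ℝ} (hN : 0 < N) (hcorr : ∀ j, |(Xᵀ *ᵥ y) j| ≤ N * μ) {u : ι → ℝ}
    (hu : ∀ v : ι → ℝ, 1 / (2 * N) * ∑ i, (y i - (X *ᵥ u) i) ^ 2 + μ * ∑ j, |u j| ≤
      1 / (2 * N) * ∑ i, (y i - (X *ᵥ v) i) ^ 2 + μ * ∑ j, |v j|) :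
    u = 0 := by
  have hzero := hu 0
  simp only [mulVec_zero, Pi.zero_apply, sub_zero, abs_zero, Finset.sum_const_zero, mul_zero,
    add_zero] at hzero
  have hscaled : 1 / (2 * N) * ∑ i, (X *ᵥ u) i ^ 2 ≤ 0 := by
    linarith [lasso_objective_ge hN hcorr u]
  have hsum : ∑ i, (X *ᵥ u) i ^ 2 = 0 :=
    le_antisymm (nonpos_of_mul_nonpos_right hscaled (by positivity))
      (Finset.sum_nonneg fun i _ => sq_nonneg _)
  have hXu : X *ᵥ u = 0 := by
    funext i
    simpa using (Finset.sum_eq_zero_iff_of_nonneg fun i _ => sq_nonneg _).mp hsum i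
      (Finset.mem_univ i)
  exact hX (hXu.trans (mulVec_zero X).symm)

lemma lasso_minimizer_eq_zero_of_noise_correlation_le {n : ℕ} (hn : 0 < n) {M : ℝ} (hM : 0 ≤ M)
    {X : Matrix (Fin n) ι ℝ} (hX : ∀ i j, |X i j| ≤ M) (hinj : Function.Injective X.mulVec)
    {w : ι → ℝ} {μ : ℝ} (hμ : 2 * M ^ 2 * ∑ j, |w j| ≤ μ) {e : Fin n → ℝ}
    (he : ∀ j, |(Xᵀ *ᵥ e) j| ≤ n * μ / 2) {u : ι → ℝ}
    (hu : ∀ v : ι → ℝ, 1 / (2 * n) * ∑ i, ((X *ᵥ w) i + e i - (X *ᵥ u) i) ^ 2 + μ * ∑ j, |u j| ≤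
      1 / (2 * n) * ∑ i, ((X *ᵥ w) i + e i - (X *ᵥ v) i) ^ 2 + μ * ∑ j, |v j|) :
    u = 0 := by
  refine lasso_minimizer_eq_zero hinj (y := X *ᵥ w + e) (by positivity) (fun j => ?_) hu
  have hsignal := abs_transpose_mulVec_mulVec_apply_le hM hX w j
  rw [Fintype.card_fin] at hsignal
  have hsignal_le := mul_le_mul_of_nonneg_left hμ (n.cast_nonneg : (0 : ℝ) ≤ n)
  calc |(Xᵀ *ᵥ (X *ᵥ w + e)) j| ≤ |(Xᵀ *ᵥ (X *ᵥ w)) j| + |(Xᵀ *ᵥ e) j| := by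
        rw [mulVec_add, Pi.add_apply]
        exact abs_add_le _ _
    _ ≤ n * μ := by linarith [he j]

end Lasso

namespace ProbabilityTheory.HasSubgaussianMGF

variable {Ω : Type*} {mΩ : MeasurableSpace Ω} {μ : Measure Ω} {X : Ω → ℝ} {c : ℝ≥0}

lemma mono (h : HasSubgaussianMGF X c μ) {c' : ℝ≥0} (hc : c ≤ c') :
    HasSubgaussianMGF X c' μ where
  integrable_exp_mul := h.integrable_exp_mul
  mgf_le t := (h.mgf_le t).trans (exp_le_exp.mpr (by gcongr))

lemma measure_abs_ge_le [IsFiniteMeasure μ] (h : HasSubgaussianMGF X c μ) {ε : ℝ} (hε : 0 ≤ ε) :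
    μ {ω | ε ≤ |X ω|} ≤ ENNReal.ofReal (2 * exp (-ε ^ 2 / (2 * c))) := by
  have hsplit : {ω | ε ≤ |X ω|} = {ω | ε ≤ X ω} ∪ {ω | ε ≤ (-X) ω} := by
    ext ω
    simp only [Set.mem_ofPred_eq, Set.mem_union, Pi.neg_apply, le_abs]
  rw [← ofReal_measureReal, hsplit, two_mul]
  gcongr
  exact (measureReal_union_le _ _).trans
    (add_le_add (h.measure_ge_le hε) (h.neg.measure_ge_le hε))

lemma sum_mul_of_iIndepFun {ι : Type*} [Fintype ι] {ε : ι → Ω → ℝ} (hindep : iIndepFun ε μ)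
    (hε : ∀ i, HasSubgaussianMGF (ε i) c μ) {a : ι → ℝ} {M : ℝ≥0} (ha : ∀ i, |a i| ≤ M) :
    HasSubgaussianMGF (fun ω => ∑ i, a i * ε i ω) (Fintype.card ι * (M ^ 2 * c)) μ := by
  have hweighted : iIndepFun (fun i ω => a i * ε i ω) μ :=
    hindep.comp (fun i x => a i * x) fun i => measurable_const_mul (a i)
  have hsum := sum_of_iIndepFun hweighted (s := Finset.univ) (c := fun _ => M ^ 2 * c)
    fun i _ => ((hε i).const_mul (a i)).mono (mul_le_mul_left ?_ c)
  · simpa only [Finset.sum_const, Finset.card_univ, nsmul_eq_mul] using hsum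
  · refine NNReal.coe_le_coe.mp ?_
    rw [NNReal.coe_pow]
    exact sq_le_sq' (neg_le_of_abs_le (ha i)) (le_of_abs_le (ha i))

end ProbabilityTheory.HasSubgaussianMGF

lemma one_sub_le_measure_of_union_bound {Ω ι : Type*} [MeasurableSpace Ω] [Fintype ι]
    {μ : Measure Ω} [IsProbabilityMeasure μ] {S : Set Ω} (B : ι → Set Ω)
    (hS : ∀ ω, (∀ j, ω ∉ B j) → ω ∈ S) {b : ℝ} (hB : ∀ j, μ (B j) ≤ ENNReal.ofReal b) :
    1 - ENNReal.ofReal (b * Fintype.card ι) ≤ μ S := by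
  have hcompl : μ Sᶜ ≤ ENNReal.ofReal (b * Fintype.card ι) :=
    calc μ Sᶜ ≤ μ (⋃ j, B j) := measure_mono fun ω hω => by
          by_contra hnot
          exact hω (hS ω fun j hj => hnot (Set.mem_iUnion_of_mem j hj))
      _ ≤ ∑ j, μ (B j) := measure_iUnion_fintype_le μ B
      _ ≤ ∑ _j : ι, ENNReal.ofReal b := Finset.sum_le_sum fun j _ => hB j
      _ = ENNReal.ofReal (b * Fintype.card ι) := by
          rw [Finset.sum_const, Finset.card_univ, nsmul_eq_mul,
            ENNReal.ofReal_mul' (Nat.cast_nonneg _), ENNReal.ofReal_natCast, mul_comm]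
  rw [tsub_le_iff_right]
  calc 1 = μ (S ∪ Sᶜ) := by rw [Set.union_compl_self, measure_univ]
    _ ≤ μ S + μ Sᶜ := measure_union_le _ _
    _ ≤ μ S + ENNReal.ofReal (b * Fintype.card ι) := by gcongr

theorem stmt_13_general {Ω : Type*} [MeasureSpace Ω] [IsProbabilityMeasure (ℙ : Measure Ω)]
    (n p : ℕ) (hn : 0 < n) (M τ σ : ℝ) (hM : 0 < M) (hτ : 0 < τ) (hσ : 0 < σ)
    (X : Matrix (Fin n) (Fin p) ℝ) (hX : ∀ i j, |X i j| ≤ M)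
    (hQ : IsUnit (((1 : ℝ) / n) • (Xᵀ * X)).det)
    (w : Fin p → ℝ)
    (ε : Fin n → Ω → ℝ)
    (hindep : iIndepFun ε ℙ)
    (hint : ∀ i (s : ℝ), Integrable (fun ω => Real.exp (s * ε i ω)) ℙ)
    (hsub : ∀ i (s : ℝ), ∫ ω, Real.exp (s * ε i ω) ∂ℙ ≤ Real.exp (s ^ 2 * τ ^ 2 / 2))
    (μ : ℝ) (hμ : 2 * M ^ 2 * (∑ j, |w j|) ≤ μ)
    (wh : Ω → Fin p → ℝ)
    (hwh : ∀ ω (v : Fin p → ℝ),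
      (1 / (2 * n) : ℝ) * (∑ i, (X.mulVec w i + ε i ω - X.mulVec (wh ω) i) ^ 2)
          + μ * ∑ j, |wh ω j| ≤
        (1 / (2 * n) : ℝ) * (∑ i, (X.mulVec w i + ε i ω - X.mulVec v i) ^ 2)
          + μ * ∑ j, |v j|) :
    1 - ENNReal.ofReal (2 * p *
        Real.exp (-(n * μ ^ 2) / (8 * M ^ 2 * σ ^ 2 * (τ / σ) ^ 2))) ≤
      ℙ {ω | wh ω = 0} := by
  have hμ0 : 0 ≤ μ := le_trans (by positivity) hμ
  have hsubG (i : Fin n) : HasSubgaussianMGF (ε i) (τ ^ 2).toNNReal ℙ :=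
    ⟨hint i, fun t => (hsub i t).trans_eq <| by
      rw [Real.coe_toNNReal _ (sq_nonneg τ)]; ring_nf⟩
  have htail (j : Fin p) : ℙ {ω | n * μ / 2 ≤ |(Xᵀ *ᵥ fun i => ε i ω) j|} ≤
      ENNReal.ofReal (2 * exp (-(n * μ ^ 2) / (8 * M ^ 2 * σ ^ 2 * (τ / σ) ^ 2))) := by
    have hcorr := HasSubgaussianMGF.sum_mul_of_iIndepFun hindep hsubG
      (a := fun i => X i j) (M := M.toNNReal) fun i => (hX i j).trans (le_coe_toNNReal M)
    convert hcorr.measure_abs_ge_le (ε := n * μ / 2) (by positivity) using 4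
    · exact Iff.rfl
    simp only [Fintype.card_fin, NNReal.coe_mul, NNReal.coe_pow, NNReal.coe_natCast,
      coe_toNNReal _ hM.le, coe_toNNReal _ (sq_nonneg τ)]
    field_simp
    ring
  have hinj := mulVec_injective_of_isUnit_det_smul_gram hQ
  have hgood (ω : Ω) (hω : ∀ j, ω ∉ {ω | n * μ / 2 ≤ |(Xᵀ *ᵥ fun i => ε i ω) j|}) :
      wh ω = 0 :=
    lasso_minimizer_eq_zero_of_noise_correlation_le hn hM.le hX hinj hμ
      (fun j => le_of_not_ge (hω j)) (hwh ω)
  convert one_sub_le_measure_of_union_bound (S := {ω | wh ω = 0}) _ hgood htail using 3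
  rw [Fintype.card_fin]
  ring

/-- Heavy-regularization regime of the Lasso: if `μ ≥ 2M²‖𝐰‖₁`, then `ŵ = 0` with
probability at least `1 − 2p·exp(−nμ²/(8M²σ²(τ/σ)²))`. -/
theorem stmt_13 {Ω : Type*} [MeasureSpace Ω] [IsProbabilityMeasure (ℙ : Measure Ω)]
    (n p : ℕ) (hn : 0 < n) (M τ σ : ℝ) (hM : 0 < M) (hτ : 0 < τ) (hσ : 0 < σ)
    (X : Matrix (Fin n) (Fin p) ℝ) (hX : ∀ i j, |X i j| ≤ M)
    (hQ : IsUnit (((1 : ℝ) / n) • (Xᵀ * X)).det)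
    (w : Fin p → ℝ)
    (ε : Fin n → Ω → ℝ) (hmeas : ∀ i, Measurable (ε i))
    (hindep : iIndepFun ε ℙ)
    (hmean : ∀ i, ∫ ω, ε i ω ∂ℙ = 0)
    (hint : ∀ i (s : ℝ), Integrable (fun ω => Real.exp (s * ε i ω)) ℙ)
    (hsub : ∀ i (s : ℝ), ∫ ω, Real.exp (s * ε i ω) ∂ℙ ≤ Real.exp (s ^ 2 * τ ^ 2 / 2))
    (hvar : ∀ i, σ ^ 2 ≤ variance (ε i) ℙ)
    (μ : ℝ) (hμ : 2 * M ^ 2 * (∑ j, |w j|) ≤ μ)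
    (wh : Ω → Fin p → ℝ)
    (hwh : ∀ ω (v : Fin p → ℝ),
      (1 / (2 * n) : ℝ) * (∑ i, (X.mulVec w i + ε i ω - X.mulVec (wh ω) i) ^ 2)
          + μ * ∑ j, |wh ω j| ≤
        (1 / (2 * n) : ℝ) * (∑ i, (X.mulVec w i + ε i ω - X.mulVec v i) ^ 2)
          + μ * ∑ j, |v j|) :
    1 - ENNReal.ofReal (2 * p *
        Real.exp (-(n * μ ^ 2) / (8 * M ^ 2 * σ ^ 2 * (τ / σ) ^ 2))) ≤
      ℙ {ω | wh ω = 0} :=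
  stmt_13_general n p hn M τ σ hM hτ hσ X hX hQ w ε hindep hint hsub μ hμ wh hwh
end

section
/- Let Q ∈ ℝ^{p×p} be symmetric positive definite, 𝐉 ⊂ {1,…,p}, and consider the local noiseless problem min_Δ ½ΔᵀQΔ + Δ_𝐉ᵀ sign(𝐰_𝐉) + ‖Δ_{𝐉ᶜ}‖₁. The unique minimizer Δ satisfies Δ_{𝐉ᶜ} = 0 if and only if ‖Q_{𝐉ᶜ,𝐉} Q_{𝐉,𝐉}⁻¹ sign(𝐰_𝐉)‖_∞ ≤ 1. -/
/-!
Write the objective as `f v = ½ vᵀQv + ∑ⱼ gⱼ(vⱼ)`, with `gⱼ = |·|` off the support `J` of `w`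
and `gⱼ` linear on `J`. If `-(Qx)ⱼ` is a subgradient of `gⱼ` at `xⱼ` for every `j`, then
`f v ≥ f x + ½ (v - x)ᵀQ(v - x)`, so `x` is the unique minimizer; conversely, perturbing the
minimizer in one coordinate shows that it satisfies these conditions. For a vector vanishing
off `J` they read `Q_{J,J} x_J = -sign(w_J)` and `|(Qx)ⱼ| ≤ 1` for `j ∉ J`. So the only
candidate is `x_J = -Q_{J,J}⁻¹ sign(w_J)`, `x_{Jᶜ} = 0`, and the second condition for it is
exactly `‖Q_{Jᶜ,J} Q_{J,J}⁻¹ sign(w_J)‖_∞ ≤ 1`.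
-/

open Matrix

namespace Matrix

variable {ι R : Type*} [Fintype ι] [CommRing R] {Q : Matrix ι ι R}

lemma IsSymm.dotProduct_mulVec_comm (hQ : Q.IsSymm) (x y : ι → R) :
    x ⬝ᵥ Q *ᵥ y = y ⬝ᵥ Q *ᵥ x := by
  rw [dotProduct_mulVec, ← mulVec_transpose, hQ.eq, dotProduct_comm]

lemma IsSymm.add_dotProduct_mulVec_add (hQ : Q.IsSymm) (x d : ι → R) :
    (x + d) ⬝ᵥ Q *ᵥ (x + d) = x ⬝ᵥ Q *ᵥ x + 2 * (d ⬝ᵥ Q *ᵥ x) + d ⬝ᵥ Q *ᵥ d := by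
  rw [mulVec_add, dotProduct_add, add_dotProduct, add_dotProduct, hQ.dotProduct_mulVec_comm x d]
  ring

lemma mulVec_apply_eq_sum_subtype (Q : Matrix ι ι R) {P : ι → Prop} [DecidablePred P]
    {x : ι → R} (hx : ∀ j, ¬ P j → x j = 0) (i : ι) :
    (Q *ᵥ x) i = ∑ k : {k // P k}, Q i k * x k := by
  rw [mulVec, dotProduct, ← Fintype.sum_subtype_add_sum_subtype P,
    Fintype.sum_eq_zero (fun k : {k // ¬ P k} => Q i k * x k) (fun k => by simp [hx k k.2]),
    add_zero]

end Matrix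

lemma abs_le_of_forall_nonneg_mul_add {a b c : ℝ}
    (h : ∀ t : ℝ, 0 ≤ a * t + c * |t| + b * t ^ 2) : |a| ≤ c := by
  refine le_of_forall_pos_le_add fun ε hε => ?_
  set δ := ε / (|b| + 1)
  have hδ : 0 < δ := by positivity
  have hbδ : b * δ ≤ ε := by
    calc b * δ ≤ (|b| + 1) * δ := by gcongr; linarith [le_abs_self b]
      _ = ε := by simp only [δ]; field_simp
  have hpos := h δ
  have hneg := h (-δ)
  rw [abs_of_pos hδ] at hpos
  rw [abs_neg, abs_of_pos hδ] at hneg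
  rw [abs_le]
  constructor <;> nlinarith

section Composite

variable {ι : Type*} [Fintype ι]

noncomputable def compositeObjective (Q : Matrix ι ι ℝ) (g : ι → ℝ → ℝ) (v : ι → ℝ) : ℝ :=
  1 / 2 * (v ⬝ᵥ Q *ᵥ v) + ∑ j, g j (v j)

variable {Q : Matrix ι ι ℝ} {g : ι → ℝ → ℝ}

lemma compositeObjective_add_single [DecidableEq ι] (hQ : Q.IsSymm) (x : ι → ℝ) (i : ι) (t : ℝ) :
    compositeObjective Q g (x + Pi.single i t) =
      compositeObjective Q g x + (Q *ᵥ x) i * t + (g i (x i + t) - g i (x i))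
        + Q i i * t ^ 2 / 2 := by
  have hpen : ∑ j, (g j ((x + Pi.single i t : ι → ℝ) j) - g j (x j)) =
      g i (x i + t) - g i (x i) := by
    rw [Fintype.sum_eq_single i fun j hj => by simp [hj]]
    simp
  rw [Finset.sum_sub_distrib] at hpen
  simp only [compositeObjective, one_div, hQ.add_dotProduct_mulVec_add, single_dotProduct,
    mulVec_single, op_smul_eq_smul, dotProduct_smul, col_apply, smul_eq_mul, Pi.add_apply]
  linear_combination hpen

lemma coord_variation_nonneg_of_forall_le [DecidableEq ι] (hQ : Q.IsSymm)
    {Δ : ι → ℝ} (hmin : ∀ v, compositeObjective Q g Δ ≤ compositeObjective Q g v) (i : ι) (t : ℝ) :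
    0 ≤ (Q *ᵥ Δ) i * t + (g i (Δ i + t) - g i (Δ i)) + Q i i / 2 * t ^ 2 := by
  have := hmin (Δ + Pi.single i t)
  rw [compositeObjective_add_single hQ] at this
  linarith

lemma compositeObjective_add_half_le (hQ : Q.IsSymm) {x : ι → ℝ}
    (hsub : ∀ i y, g i (x i) ≤ g i y + (Q *ᵥ x) i * (y - x i)) (v : ι → ℝ) :
    compositeObjective Q g x + 1 / 2 * ((v - x) ⬝ᵥ Q *ᵥ (v - x)) ≤ compositeObjective Q g v := by
  have hquad := hQ.add_dotProduct_mulVec_add x (v - x)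
  rw [add_sub_cancel] at hquad
  have hlin : (v - x) ⬝ᵥ Q *ᵥ x = ∑ i, (Q *ᵥ x) i * (v i - x i) := by
    simp only [dotProduct, Pi.sub_apply, mul_comm]
  have hpen : ∑ i, g i (x i) ≤ ∑ i, g i (v i) + ∑ i, (Q *ᵥ x) i * (v i - x i) := by
    rw [← Finset.sum_add_distrib]
    exact Finset.sum_le_sum fun i _ => hsub i (v i)
  simp only [compositeObjective]
  linarith

lemma eq_of_forall_compositeObjective_le (hQ : Q.PosDef) {x Δ : ι → ℝ}
    (hsub : ∀ i y, g i (x i) ≤ g i y + (Q *ᵥ x) i * (y - x i))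
    (hmin : ∀ v, compositeObjective Q g Δ ≤ compositeObjective Q g v) : Δ = x := by
  by_contra hne
  have hpos := hQ.dotProduct_mulVec_pos (sub_ne_zero.mpr hne)
  rw [star_trivial] at hpos
  linarith [compositeObjective_add_half_le (isHermitian_iff_isSymm.mp hQ.1) hsub Δ, hmin x]

end Composite

section Lasso

variable {ι : Type*} [Fintype ι] {Q : Matrix ι ι ℝ} {w x Δ : ι → ℝ}

noncomputable def lassoPenalty (w : ι → ℝ) (j : ι) (y : ℝ) : ℝ :=
  if w j = 0 then |y| else y * Real.sign (w j)

lemma mulVec_apply_eq_neg_sign_of_forall_le [DecidableEq ι] (hQ : Q.IsSymm)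
    (hmin : ∀ v, compositeObjective Q (lassoPenalty w) Δ ≤ compositeObjective Q (lassoPenalty w) v)
    {i : ι} (hi : w i ≠ 0) : (Q *ᵥ Δ) i = -Real.sign (w i) := by
  have key : |(Q *ᵥ Δ) i + Real.sign (w i)| ≤ 0 :=
    abs_le_of_forall_nonneg_mul_add (b := Q i i / 2) fun t => by
      have := coord_variation_nonneg_of_forall_le hQ hmin i t
      simp only [lassoPenalty, if_neg hi] at this
      linarith
  linarith [abs_nonpos_iff.mp key]

lemma abs_mulVec_apply_le_one_of_forall_le [DecidableEq ι] (hQ : Q.IsSymm)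
    (hmin : ∀ v, compositeObjective Q (lassoPenalty w) Δ ≤ compositeObjective Q (lassoPenalty w) v)
    {j : ι} (hj : w j = 0) (hΔ : Δ j = 0) : |(Q *ᵥ Δ) j| ≤ 1 :=
  abs_le_of_forall_nonneg_mul_add (b := Q j j / 2) fun t => by
    have := coord_variation_nonneg_of_forall_le hQ hmin j t
    simp only [lassoPenalty, if_pos hj, hΔ] at this
    simpa using this

lemma lassoPenalty_le_add_mul
    (hsupp : ∀ i, w i ≠ 0 → (Q *ᵥ x) i = -Real.sign (w i))
    (hoff : ∀ j, w j = 0 → x j = 0 ∧ |(Q *ᵥ x) j| ≤ 1) (i : ι) (y : ℝ) :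
    lassoPenalty w i (x i) ≤ lassoPenalty w i y + (Q *ᵥ x) i * (y - x i) := by
  unfold lassoPenalty
  split_ifs with hi
  · obtain ⟨hx, hQx⟩ := hoff i hi
    rw [hx, abs_zero, sub_zero]
    have h := neg_abs_le ((Q *ᵥ x) i * y)
    rw [abs_mul] at h
    nlinarith [abs_nonneg y]
  · rw [hsupp i hi]
    exact le_of_eq (by ring)

end Lasso

section Oracle

variable {ι : Type*} [Fintype ι] [DecidableEq ι] {Q : Matrix ι ι ℝ} {w Δ : ι → ℝ}

variable (Q w) in
abbrev supportSubmatrix : Matrix {i // w i ≠ 0} {i // w i ≠ 0} ℝ :=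
  Q.submatrix (·.val) (·.val)

variable (Q w) in
noncomputable def lassoCertificate : {i // w i ≠ 0} → ℝ :=
  (supportSubmatrix Q w)⁻¹ *ᵥ fun i => Real.sign (w i)

-- The solution of the stationarity equations `Q_{J,J} Δ_J = -sign(w_J)` on the support `J`
-- of `w`, extended by zero.
variable (Q w) in
noncomputable def lassoOracle (j : ι) : ℝ :=
  if h : w j = 0 then 0 else -lassoCertificate Q w ⟨j, h⟩

lemma lassoOracle_of_eq_zero {j : ι} (hj : w j = 0) : lassoOracle Q w j = 0 :=
  dif_pos hj

lemma lassoOracle_val (i : {i // w i ≠ 0}) : lassoOracle Q w i = -lassoCertificate Q w i :=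
  dif_neg i.2

lemma mulVec_lassoOracle_apply (j : ι) :
    (Q *ᵥ lassoOracle Q w) j = -∑ i : {i // w i ≠ 0}, Q j i * lassoCertificate Q w i := by
  rw [Q.mulVec_apply_eq_sum_subtype (fun k hk => lassoOracle_of_eq_zero (not_not.mp hk))]
  simp only [lassoOracle_val, mul_neg, Finset.sum_neg_distrib]

lemma isUnit_det_submatrix_support (hQ : Q.PosDef) :
    IsUnit (supportSubmatrix Q w).det :=
  (isUnit_iff_isUnit_det _).mp (hQ.submatrix Subtype.val_injective).isUnit

lemma mulVec_lassoOracle_apply_of_ne_zero (hQ : Q.PosDef) {i : ι} (hi : w i ≠ 0) :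
    (Q *ᵥ lassoOracle Q w) i = -Real.sign (w i) := by
  have hcert : supportSubmatrix Q w *ᵥ lassoCertificate Q w =
      fun i : {i // w i ≠ 0} => Real.sign (w i) := by
    rw [lassoCertificate, mulVec_mulVec, mul_nonsing_inv _ (isUnit_det_submatrix_support hQ),
      one_mulVec]
  rw [mulVec_lassoOracle_apply]
  exact congrArg Neg.neg (congrFun hcert ⟨i, hi⟩)

lemma eq_lassoOracle_of_forall_le (hQ : Q.PosDef)
    (hmin : ∀ v, compositeObjective Q (lassoPenalty w) Δ ≤ compositeObjective Q (lassoPenalty w) v)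
    (hz : ∀ j, w j = 0 → Δ j = 0) : Δ = lassoOracle Q w := by
  have hstat : supportSubmatrix Q w *ᵥ (fun i : {i // w i ≠ 0} => Δ i) =
      -fun i : {i // w i ≠ 0} => Real.sign (w i) := funext fun i =>
    (Q.mulVec_apply_eq_sum_subtype (fun j hj => hz j (not_not.mp hj)) i).symm.trans
      (mulVec_apply_eq_neg_sign_of_forall_le (isHermitian_iff_isSymm.mp hQ.1) hmin i.2)
  have hΔJ : (fun i : {i // w i ≠ 0} => Δ i) = -lassoCertificate Q w := by
    rw [lassoCertificate, ← mulVec_neg, ← hstat, mulVec_mulVec,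
      nonsing_inv_mul _ (isUnit_det_submatrix_support hQ), one_mulVec]
  funext j
  by_cases hj : w j = 0
  · rw [hz j hj, lassoOracle_of_eq_zero hj]
  · rw [lassoOracle_val ⟨j, hj⟩]
    exact congrFun hΔJ ⟨j, hj⟩

lemma eq_lassoOracle_of_abs_le_one (hQ : Q.PosDef)
    (hmin : ∀ v, compositeObjective Q (lassoPenalty w) Δ ≤ compositeObjective Q (lassoPenalty w) v)
    (hcert : ∀ j, w j = 0 → |∑ i : {i // w i ≠ 0}, Q j i * lassoCertificate Q w i| ≤ 1) :
    Δ = lassoOracle Q w :=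
  eq_of_forall_compositeObjective_le hQ
    (lassoPenalty_le_add_mul (fun _ hi => mulVec_lassoOracle_apply_of_ne_zero hQ hi) fun j hj =>
      ⟨lassoOracle_of_eq_zero hj, by rw [mulVec_lassoOracle_apply, abs_neg]; exact hcert j hj⟩)
    hmin

end Oracle

/-- The minimizer `Δ` of the local noiseless problem
`½ΔᵀQΔ + Δ_𝐉ᵀ sign(𝐰_𝐉) + ‖Δ_{𝐉ᶜ}‖₁` satisfies `Δ_{𝐉ᶜ} = 0` if and only if the
Lasso consistency condition `‖Q_{𝐉ᶜ,𝐉} Q_{𝐉,𝐉}⁻¹ sign(𝐰_𝐉)‖_∞ ≤ 1` holds. -/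
theorem stmt_15 {p : ℕ} (Q : Matrix (Fin p) (Fin p) ℝ) (hQ : Q.PosDef)
    (w : Fin p → ℝ) (Δ : Fin p → ℝ)
    (hmin : ∀ v : Fin p → ℝ,
      (1 / 2) * (Δ ⬝ᵥ Q.mulVec Δ)
          + (∑ j, if w j = 0 then |Δ j| else Δ j * Real.sign (w j)) ≤
        (1 / 2) * (v ⬝ᵥ Q.mulVec v)
          + (∑ j, if w j = 0 then |v j| else v j * Real.sign (w j))) :
    (∀ j, w j = 0 → Δ j = 0) ↔
      (∀ j, w j = 0 →
        |∑ i : {i : Fin p // w i ≠ 0},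
            Q j i.val *
              ((Q.submatrix (·.val) (·.val) :
                  Matrix {i : Fin p // w i ≠ 0} {i : Fin p // w i ≠ 0} ℝ)⁻¹.mulVec
                (fun i : {i : Fin p // w i ≠ 0} => Real.sign (w i.val))) i| ≤ 1) := by
  change ∀ v, compositeObjective Q (lassoPenalty w) Δ ≤ compositeObjective Q (lassoPenalty w) v
    at hmin
  constructor
  · intro hz j hj
    have h := abs_mulVec_apply_le_one_of_forall_le (isHermitian_iff_isSymm.mp hQ.1) hmin hj
      (hz j hj)
    rw [eq_lassoOracle_of_forall_le hQ hmin hz, mulVec_lassoOracle_apply, abs_neg] at h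
    exact h
  · intro hcert j hj
    rw [eq_lassoOracle_of_abs_le_one hQ hmin hcert]
    exact lassoOracle_of_eq_zero hj
end
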